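/- Let H ∈ ℂ^{N_r×N_t} have compact SVD H = U Σ Vᴴ with U ∈ ℂ^{N_r×L}, V ∈ ℂ^{N_t×L}, and let Û ∈ ℂ^{N_r×L}, V̂ ∈ ℂ^{N_t×L} be semi-unitary. Define η(Û, V̂) = ‖Ûᴴ H V̂‖_F² / tr(Hᴴ H). Then η(Û, V̂) ≥ σ_L(Ûᴴ U)² · σ_L(V̂ᴴ V)², where σ_L denotes the L-th largest (smallest) singular value of the respective L×L matrices. -/

import Mathlib

/-!
Write `A = Ûᴴ U`, `B = V̂ᴴ V` and `S = diag s`, so that `Ûᴴ H V̂ = A S Bᴴ` and, `U` and `V` being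
isometries, `tr(HᴴH) = ‖S‖_F²`. For a square `A`, the matrix `AᴴA - σ_L(A)² I` is positive
semidefinite, since `AᴴA` and `AAᴴ` have the same characteristic polynomial; hence left
multiplication by `A` scales squared Frobenius norms by at least `σ_L(A)²`. Apply this to `A`,
and to `B` after conjugate transposition.
-/

open Matrix

/-- The `i`-th largest singular value (0-indexed) of a complex matrix. -/
noncomputable def svalDesc {m n : ℕ} (A : Matrix (Fin m) (Fin n) ℂ) (i : Fin m) : ℝ :=
  Real.sqrt ((Matrix.isHermitian_mul_conjTranspose_self A).eigenvalues
    (Tuple.sort ((Matrix.isHermitian_mul_conjTranspose_self A).eigenvalues) i.rev))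

/-- The squared Frobenius norm. -/
noncomputable def frobSq {m n : Type*} [Fintype m] [Fintype n] (A : Matrix m n ℂ) : ℝ :=
  ∑ i, ∑ j, ‖A i j‖ ^ 2

open scoped ComplexOrder

namespace Matrix
variable {n 𝕜 : Type*} [Fintype n] [DecidableEq n] [RCLike 𝕜]

theorem IsHermitian.posSemidef_sub_smul_one_of_le_eigenvalues {A : Matrix n n 𝕜}
    (hA : A.IsHermitian) {c : ℝ} (hc : ∀ i, c ≤ hA.eigenvalues i) :
    (A - (c : 𝕜) • 1).PosSemidef := by
  have hconj : A - (c : 𝕜) • 1 = Unitary.conjStarAlgAut 𝕜 _ hA.eigenvectorUnitary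
      (diagonal (RCLike.ofReal ∘ (hA.eigenvalues - fun _ => c))) := by
    conv_lhs => rw [hA.spectral_theorem]
    rw [← map_one (Unitary.conjStarAlgAut 𝕜 _ hA.eigenvectorUnitary), ← map_smul, ← map_sub]
    congr 1
    ext i j
    by_cases h : i = j <;> simp [h, Algebra.algebraMap_eq_smul_one]
  rw [hconj, Unitary.conjStarAlgAut_apply,
    Unitary.isUnit_coe.posSemidef_star_right_conjugate_iff, posSemidef_diagonal_iff]
  intro i
  simpa using hc i

theorem eigenvalues_conjTranspose_mul_self_eq_eigenvalues_self_mul_conjTranspose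
    (A : Matrix n n 𝕜) :
    (isHermitian_conjTranspose_mul_self A).eigenvalues =
      (isHermitian_mul_conjTranspose_self A).eigenvalues :=
  (IsHermitian.eigenvalues_eq_eigenvalues_iff _ _).2 (charpoly_mul_comm _ _)

end Matrix

section
variable {m n p : Type*} [Fintype m] [Fintype n] [Fintype p]

theorem frobSq_eq_re_trace (A : Matrix m n ℂ) : frobSq A = (Aᴴ * A).trace.re := by
  rw [frobSq, Finset.sum_comm]
  simp [trace, mul_apply, Complex.re_sum, ← Complex.normSq_eq_norm_sq, Complex.normSq_apply]

theorem frobSq_conjTranspose (A : Matrix m n ℂ) : frobSq Aᴴ = frobSq A := by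
  rw [frobSq, frobSq, Finset.sum_comm]
  simp

theorem frobSq_pos {A : Matrix m n ℂ} {i : m} {j : n} (h : A i j ≠ 0) : 0 < frobSq A :=
  Finset.sum_pos' (fun _ _ => by positivity) ⟨i, Finset.mem_univ _,
    Finset.sum_pos' (fun _ _ => by positivity) ⟨j, Finset.mem_univ _, by positivity⟩⟩

theorem frobSq_mul_of_conjTranspose_mul_self_eq_one [DecidableEq n] {U : Matrix m n ℂ}
    (hU : Uᴴ * U = 1) (X : Matrix n p ℂ) : frobSq (U * X) = frobSq X := by
  rw [frobSq_eq_re_trace, frobSq_eq_re_trace, conjTranspose_mul, Matrix.mul_assoc,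
    ← Matrix.mul_assoc Uᴴ, hU, Matrix.one_mul]

theorem frobSq_mul_conjTranspose_of_conjTranspose_mul_self_eq_one [DecidableEq n]
    {V : Matrix m n ℂ} (hV : Vᴴ * V = 1) (X : Matrix p n ℂ) : frobSq (X * Vᴴ) = frobSq X := by
  rw [← frobSq_conjTranspose, conjTranspose_mul, conjTranspose_conjTranspose,
    frobSq_mul_of_conjTranspose_mul_self_eq_one hV, frobSq_conjTranspose]

theorem mul_frobSq_le_frobSq_mul [DecidableEq n] (A : Matrix m n ℂ) (Y : Matrix n p ℂ) {c : ℝ}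
    (hc : ∀ i, c ≤ (isHermitian_conjTranspose_mul_self A).eigenvalues i) :
    c * frobSq Y ≤ frobSq (A * Y) := by
  have h := (isHermitian_conjTranspose_mul_self A).posSemidef_sub_smul_one_of_le_eigenvalues hc
    |>.conjTranspose_mul_mul_same Y |>.trace_nonneg
  rw [Matrix.mul_sub, Matrix.sub_mul, trace_sub, Matrix.mul_smul, Matrix.smul_mul, trace_smul,
    Matrix.mul_one, ← Matrix.mul_assoc, ← conjTranspose_mul, Matrix.mul_assoc,
    Complex.le_def] at h
  rw [frobSq_eq_re_trace, frobSq_eq_re_trace]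
  simpa using h.1

end

section
variable {n : ℕ}

theorem svalDesc_last_sq_le_eigenvalues (hn : 0 < n) {k : ℕ} (A : Matrix (Fin n) (Fin k) ℂ)
    (j : Fin n) :
    svalDesc A ⟨n - 1, Nat.sub_one_lt_of_lt hn⟩ ^ 2
      ≤ (isHermitian_mul_conjTranspose_self A).eigenvalues j := by
  set f := (isHermitian_mul_conjTranspose_self A).eigenvalues
  have hrev : (⟨n - 1, Nat.sub_one_lt_of_lt hn⟩ : Fin n).rev = ⟨0, hn⟩ := by ext; simp; omega
  rw [svalDesc, hrev, Real.sq_sqrt (eigenvalues_self_mul_conjTranspose_nonneg A _)]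
  calc f (Tuple.sort f ⟨0, hn⟩) ≤ f (Tuple.sort f ((Tuple.sort f).symm j)) :=
        Tuple.monotone_sort f (Fin.mk_le_mk.2 (Nat.zero_le _))
    _ = f j := by rw [Equiv.apply_symm_apply]

variable {p : Type*} [Fintype p]

theorem svalDesc_last_sq_mul_frobSq_le_frobSq_mul (hn : 0 < n)
    (A : Matrix (Fin n) (Fin n) ℂ) (Y : Matrix (Fin n) p ℂ) :
    svalDesc A ⟨n - 1, Nat.sub_one_lt_of_lt hn⟩ ^ 2 * frobSq Y ≤ frobSq (A * Y) :=
  mul_frobSq_le_frobSq_mul A Y fun i =>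
    eigenvalues_conjTranspose_mul_self_eq_eigenvalues_self_mul_conjTranspose A ▸
      svalDesc_last_sq_le_eigenvalues hn A i

theorem svalDesc_last_sq_mul_frobSq_le_frobSq_mul_conjTranspose (hn : 0 < n)
    (A : Matrix (Fin n) (Fin n) ℂ) (Y : Matrix p (Fin n) ℂ) :
    svalDesc A ⟨n - 1, Nat.sub_one_lt_of_lt hn⟩ ^ 2 * frobSq Y ≤ frobSq (Y * Aᴴ) := by
  rw [← frobSq_conjTranspose (Y * Aᴴ), conjTranspose_mul, conjTranspose_conjTranspose,
    ← frobSq_conjTranspose Y]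
  exact svalDesc_last_sq_mul_frobSq_le_frobSq_mul hn A Yᴴ

end

/-- Joint subspace accuracy bound: for a compact SVD `H = U Σ Vᴴ` and semi-unitary
`Û, V̂`, `η(Û,V̂) = ‖Ûᴴ H V̂‖_F²/tr(HᴴH) ≥ σ_L(Ûᴴ U)² σ_L(V̂ᴴ V)²`. -/
theorem joint_subspace_accuracy_bound {Nr Nt L : ℕ} (hL : 0 < L)
    (H : Matrix (Fin Nr) (Fin Nt) ℂ)
    (U : Matrix (Fin Nr) (Fin L) ℂ) (s : Fin L → ℝ) (V : Matrix (Fin Nt) (Fin L) ℂ)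
    (hU : Uᴴ * U = 1) (hV : Vᴴ * V = 1) (hs : ∀ i, 0 < s i)
    (hSVD : H = U * Matrix.diagonal (fun i => (s i : ℂ)) * Vᴴ)
    (Uhat : Matrix (Fin Nr) (Fin L) ℂ) (Vhat : Matrix (Fin Nt) (Fin L) ℂ) :
    frobSq (Uhatᴴ * H * Vhat) / (Matrix.trace (Hᴴ * H)).re
      ≥ (svalDesc (Uhatᴴ * U) ⟨L - 1, by omega⟩) ^ 2 *
        (svalDesc (Vhatᴴ * V) ⟨L - 1, by omega⟩) ^ 2 := by
  set S : Matrix (Fin L) (Fin L) ℂ := diagonal fun i => (s i : ℂ)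
  have hTrace : (Hᴴ * H).trace.re = frobSq S := by
    rw [← frobSq_eq_re_trace, hSVD, frobSq_mul_conjTranspose_of_conjTranspose_mul_self_eq_one hV,
      frobSq_mul_of_conjTranspose_mul_self_eq_one hU]
  have hS : 0 < frobSq S := frobSq_pos (i := ⟨0, hL⟩) (j := ⟨0, hL⟩) (by simp [S, (hs _).ne'])
  have hProd : Uhatᴴ * H * Vhat = (Uhatᴴ * U) * (S * (Vhatᴴ * V)ᴴ) := by
    simp only [hSVD, conjTranspose_mul, conjTranspose_conjTranspose, Matrix.mul_assoc]
  rw [ge_iff_le, hTrace, le_div_iff₀ hS, hProd, mul_assoc]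
  calc _ ≤ _ * frobSq (S * (Vhatᴴ * V)ᴴ) := by
        gcongr; exact svalDesc_last_sq_mul_frobSq_le_frobSq_mul_conjTranspose hL _ S
    _ ≤ _ := svalDesc_last_sq_mul_frobSq_le_frobSq_mul hL _ _
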